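/- arXiv:2501.17520 — 8 statements merged into one kernel-verified Lean document; each statement's English description precedes it below -/
import Mathlib

section
/- Let (X, y) be a random pair with X a random vector in ℝ^p and y real-valued, and suppose the conditional null hypothesis holds at coordinate j: X^j and y are conditionally independent given X^{−j}. Let X̃^j be a random variable such that, conditionally on X^{−j}, X̃^j has the same conditional law as X^j and is conditionally independent of the pair (X^j, y) given X^{−j}. Then the triple ((X̃^j, X^{−j}), y) has the same joint distribution as ((X^j, X^{−j}), y); i.e., conditionally resampling the j-th coordinate leaves the joint law of (X, y) unchanged under the conditional null. -/
open MeasureTheory ProbabilityTheory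

/-!
Given `X^{-j}`, both `X^j` and `X̃^j` are conditionally independent of `y`, and they have the
same conditional law. Conditional independence factors the joint law of `(X^{-j}, X^j, y)` as the
law of `X^{-j}` composed with the product of the two conditional laws, and likewise for
`(X^{-j}, X̃^j, y)`; the two factorisations agree almost everywhere, so the joint laws coincide.
-/

namespace ProbabilityTheory

variable {Ω β β' γ : Type*} {mΩ : MeasurableSpace Ω} [StandardBorelSpace Ω]
  [MeasurableSpace β] [StandardBorelSpace β] [Nonempty β]
  [MeasurableSpace β'] [StandardBorelSpace β'] [Nonempty β'] [MeasurableSpace γ]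
  {μ : Measure Ω} [IsFiniteMeasure μ]

theorem map_prodMk_eq_of_condIndepFun_of_condDistrib_ae_eq {A A' : Ω → β} {B : Ω → β'}
    {Z : Ω → γ} (hA : Measurable A) (hA' : Measurable A') (hB : Measurable B)
    (hZ : Measurable Z) (hAB : A ⟂ᵢ[Z, hZ; μ] B) (hA'B : A' ⟂ᵢ[Z, hZ; μ] B)
    (hlaw : condDistrib A' Z μ =ᵐ[μ.map Z] condDistrib A Z μ) :
    μ.map (fun ω ↦ (Z ω, A' ω, B ω)) = μ.map (fun ω ↦ (Z ω, A ω, B ω)) := by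
  rw [(condIndepFun_iff_map_prod_eq_prod_condDistrib_prod_condDistrib hA' hB hZ).1 hA'B,
    (condIndepFun_iff_map_prod_eq_prod_condDistrib_prod_condDistrib hA hB hZ).1 hAB]
  refine Measure.comp_congr (hlaw.mono fun z hz ↦ ?_)
  simp only [Kernel.prod_apply, Kernel.id_apply, hz]

end ProbabilityTheory

/-- conditional resampling leaves the joint law invariant under the
conditional null: if `X^j ⟂⟂ y | X^{-j}` and `X̃^j` has, conditionally on `X^{-j}`, the same
conditional law as `X^j` and is conditionally independent of `(X^j, y)` given `X^{-j}`, then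
`((X̃^j, X^{-j}), y)` has the same joint distribution as `((X^j, X^{-j}), y)`. -/
theorem conditional_resampling_invariance
    {Ω : Type*} [mΩ : MeasurableSpace Ω] [StandardBorelSpace Ω]
    (P : Measure Ω) [IsProbabilityMeasure P]
    {p : ℕ} (j : Fin p) (X : Ω → Fin p → ℝ) (y : Ω → ℝ) (Xtj : Ω → ℝ)
    (hX : Measurable X) (hy : Measurable y) (hXtj : Measurable Xtj)
    (hle : MeasurableSpace.comap (fun ω (i : {i : Fin p // i ≠ j}) => X ω i.1)
        inferInstance ≤ mΩ)
    (hnull : CondIndepFun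
      (MeasurableSpace.comap (fun ω (i : {i : Fin p // i ≠ j}) => X ω i.1) inferInstance)
      hle (fun ω => X ω j) y P)
    (hcondlaw : ∀ᵐ x ∂(P.map (fun ω (i : {i : Fin p // i ≠ j}) => X ω i.1)),
      condDistrib Xtj (fun ω (i : {i : Fin p // i ≠ j}) => X ω i.1) P x
        = condDistrib (fun ω => X ω j) (fun ω (i : {i : Fin p // i ≠ j}) => X ω i.1) P x)
    (hcondindep : CondIndepFun
      (MeasurableSpace.comap (fun ω (i : {i : Fin p // i ≠ j}) => X ω i.1) inferInstance)
      hle Xtj (fun ω => (X ω j, y ω)) P) :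
    P.map (fun ω => ((Xtj ω, fun i : {i : Fin p // i ≠ j} => X ω i.1), y ω))
      = P.map (fun ω => ((X ω j, fun i : {i : Fin p // i ≠ j} => X ω i.1), y ω)) := by
  set Z : Ω → {i : Fin p // i ≠ j} → ℝ := fun ω i ↦ X ω i.1
  have hZ : Measurable Z := by fun_prop
  have hXj : Measurable fun ω ↦ X ω j := by fun_prop
  have hXtj_y : Xtj ⟂ᵢ[Z, hZ; P] y := hcondindep.comp measurable_id measurable_snd
  have hjoint : P.map (fun ω ↦ (Z ω, Xtj ω, y ω)) = P.map (fun ω ↦ (Z ω, X ω j, y ω)) :=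
    map_prodMk_eq_of_condIndepFun_of_condDistrib_ae_eq hXj hXtj hy hZ hnull hXtj_y hcondlaw
  let reorder : ({i : Fin p // i ≠ j} → ℝ) × ℝ × ℝ → (ℝ × ({i : Fin p // i ≠ j} → ℝ)) × ℝ :=
    fun q ↦ ((q.2.1, q.1), q.2.2)
  have hreorder : Measurable reorder := by fun_prop
  have := congrArg (Measure.map reorder) hjoint
  rwa [Measure.map_map hreorder (by fun_prop), Measure.map_map hreorder (by fun_prop)] at this
end

section
/- Fix a finite test set (x_i, y_i)_{i=1}^{N} in ℝ^p × ℝ and points x̃'_i ∈ ℝ^p with x̃'^{−j}_i = x_i^{−j} for every i (arbitrary imputations of coordinate j). Let ℓ : ℝ × ℝ → ℝ be a loss such that ℓ(·, y_i) is uniformly continuous for each i. Let (m̂_n)_{n≥1} be a sequence of functions ℝ^p → ℝ satisfying asymptotic relevance at coordinate j: for every ε > 0 there exists n₀ such that for all n ≥ n₀, all x ∈ ℝ^p and all s ∈ ℝ, |m̂_n(x) − m̂_n(g_j(x, s))| ≤ ε, where g_j(x, s) denotes x with its j-th coordinate replaced by s. Then the empirical Conditional Permutation Importance (1/N) Σ_{i=1}^{N}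 [ ℓ(m̂_n(x̃'_i), y_i) − ℓ(m̂_n(x_i), y_i) ] converges to 0 as n → ∞. -/
open Filter

noncomputable section

/-- model-side double robustness of CPI: for a fixed finite test set, fixed
imputations of coordinate `j`, a loss `ℓ` uniformly continuous in its first argument, and a
sequence of models `m̂ₙ` satisfying asymptotic relevance at coordinate `j` (eventually the
predictions are insensitive, up to any `ε`, to the value of the `j`-th coordinate), the
empirical Conditional Permutation Importance converges to `0`. -/
theorem cpi_model_double_robustness
    {p : ℕ} (j : Fin p) (N : ℕ) (hN : 0 < N)
    (x xt' : Fin N → Fin p → ℝ) (y : Fin N → ℝ)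
    (hagree : ∀ i, ∀ l, l ≠ j → xt' i l = x i l)
    (ℓ : ℝ → ℝ → ℝ) (hℓ : ∀ i, UniformContinuous fun a => ℓ a (y i))
    (mhat : ℕ → (Fin p → ℝ) → ℝ)
    (hrel : ∀ ε > (0 : ℝ), ∃ n₀, ∀ n ≥ n₀, ∀ (z : Fin p → ℝ) (s : ℝ),
      |mhat n z - mhat n (Function.update z j s)| ≤ ε) :
    Tendsto
      (fun n => (1 / (N : ℝ)) * ∑ i, (ℓ (mhat n (xt' i)) (y i) - ℓ (mhat n (x i)) (y i)))
      atTop (nhds 0) := by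
  have key : ∀ i : Fin N, Tendsto
      (fun n => ℓ (mhat n (xt' i)) (y i) - ℓ (mhat n (x i)) (y i)) atTop (nhds 0) := by
    intro i
    rw [Metric.tendsto_atTop]
    intro ε hε
    obtain ⟨δ, hδ, hδε⟩ := Metric.uniformContinuous_iff.mp (hℓ i) ε hε
    obtain ⟨n₀, hn₀⟩ := hrel (δ / 2) (by linarith)
    refine ⟨n₀, fun n hn => ?_⟩
    have hupd : Function.update (xt' i) j (x i j) = x i := by
      funext l
      by_cases hl : l = j
      · subst hl; simp
      · rw [Function.update_of_ne hl]; exact hagree i l hl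
    have h1 := hn₀ n hn (xt' i) (x i j)
    rw [hupd] at h1
    have hdist : dist (mhat n (xt' i)) (mhat n (x i)) < δ := by
      rw [Real.dist_eq]; linarith
    have := hδε hdist
    simpa [Real.dist_eq] using this
  have hsum : Tendsto
      (fun n => ∑ i, (ℓ (mhat n (xt' i)) (y i) - ℓ (mhat n (x i)) (y i)))
      atTop (nhds 0) := by
    have := tendsto_finset_sum (Finset.univ : Finset (Fin N)) (fun i _ => key i)
    simpa using this
  have := hsum.const_mul (1 / (N : ℝ))
  simpa using this

end
end

section
/- Let X, X̃, X̃' be random vectors in ℝ^p and y a real random variable satisfying: (i) y = m(X) + ε with ε independent of (X, X̃, X̃'), E[ε] = 0 and E[ε²] < ∞; (ii) X̃ has the same distribution as X; (iii) m(X̃) = m(X) almost surely (the conditional null at coordinate j, where X̃ is the theoretical conditional resample, X̃' the empirical one); (iv) m(X), m̂(X), m̂(X̃), m̂(X̃') are square-integrable. Then the expected CPI satisfies E[(y − m̂(X̃'))²] − E[(y − m̂(X))²] = E[(m̂(X̃) − m̂(X̃'))²] + 2 E[(m(X̃) − m̂(X̃))(m̂(X̃) − m̂(X̃'))]. In particular,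 the bias of CPI under the conditional null vanishes whenever either m̂ is close to m or X̃' is close to X̃ (double robustness). -/
open MeasureTheory ProbabilityTheory

/-!
Write `y - m̂(Z) = (m(X) - m̂(Z)) + ε`. Since `ε` is centred and independent of `(X, X̃, X̃')`,
the cross term vanishes and each expected loss is `E[(m(X) - m̂(Z))²] + E[ε²]`, so the noise
cancels in the CPI. Under the null `m(X)` may be replaced by `m(X̃)`, and `X̃ ∼ X` turns
`E[(m(X) - m̂(X))²]` into `E[(m(X̃) - m̂(X̃))²]`; expanding
`m(X̃) - m̂(X̃') = (m(X̃) - m̂(X̃)) + (m̂(X̃) - m̂(X̃'))` gives the decomposition.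
-/

namespace MeasureTheory

variable {Ω : Type*} [MeasurableSpace Ω] {μ : Measure Ω}

lemma integral_add_sq {f g : Ω → ℝ} (hf : MemLp f 2 μ) (hg : MemLp g 2 μ) :
    ∫ ω, (f ω + g ω) ^ 2 ∂μ
      = ∫ ω, f ω ^ 2 ∂μ + 2 * ∫ ω, f ω * g ω ∂μ + ∫ ω, g ω ^ 2 ∂μ := by
  have hfg : Integrable (fun ω => 2 * (f ω * g ω)) μ := (hf.integrable_mul hg).const_mul 2
  simp only [add_sq, mul_assoc]
  rw [integral_add (by exact hf.integrable_sq.add hfg) hg.integrable_sq,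
    integral_add hf.integrable_sq hfg, integral_const_mul]

lemma integral_add_sub_sq_of_integral_mul_eq_zero {a e g : Ω → ℝ} (ha : MemLp a 2 μ)
    (he : MemLp e 2 μ) (hg : MemLp g 2 μ) (hae : ∫ ω, (a ω - g ω) * e ω ∂μ = 0) :
    ∫ ω, (a ω + e ω - g ω) ^ 2 ∂μ = ∫ ω, (a ω - g ω) ^ 2 ∂μ + ∫ ω, e ω ^ 2 ∂μ := by
  have h := integral_add_sq (ha.sub hg) he
  simpa only [Pi.sub_apply, hae, mul_zero, add_zero, sub_add_eq_add_sub] using h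

end MeasureTheory

namespace ProbabilityTheory

variable {Ω β : Type*} [MeasurableSpace Ω] [MeasurableSpace β] {μ : Measure Ω}

lemma IndepFun.integral_comp_mul_eq_zero {Z : Ω → β} {ε : Ω → ℝ} {f : β → ℝ}
    (h : IndepFun ε Z μ) (hε : AEStronglyMeasurable ε μ) (hε0 : ∫ ω, ε ω ∂μ = 0)
    (hf : Measurable f) (hfZ : AEStronglyMeasurable (fun ω => f (Z ω)) μ) :
    ∫ ω, f (Z ω) * ε ω ∂μ = 0 := by
  have hεfZ : IndepFun ε (fun ω => f (Z ω)) μ := h.comp measurable_id hf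
  simp_rw [mul_comm (f _)]
  rw [hεfZ.integral_fun_mul_eq_mul_integral hε hfZ, hε0, zero_mul]

end ProbabilityTheory

theorem cpi_bias_decomposition_general
    {Ω : Type*} [MeasurableSpace Ω] (P : Measure Ω)
    {p : ℕ} (X Xt Xt' : Ω → Fin p → ℝ) (y ε : Ω → ℝ)
    (m mhat : (Fin p → ℝ) → ℝ) (hm : Measurable m) (hmhat : Measurable mhat)
    (hy : ∀ ω, y ω = m (X ω) + ε ω)
    (hεindep : IndepFun ε (fun ω => (X ω, Xt ω, Xt' ω)) P)
    (hε0 : (∫ ω, ε ω ∂P) = 0) (hε2 : MemLp ε 2 P)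
    (hXtX : IdentDistrib Xt X P P)
    (hnull : (fun ω => m (Xt ω)) =ᵐ[P] fun ω => m (X ω))
    (h1 : MemLp (fun ω => m (X ω)) 2 P)
    (h2 : MemLp (fun ω => mhat (X ω)) 2 P)
    (h3 : MemLp (fun ω => mhat (Xt ω)) 2 P)
    (h4 : MemLp (fun ω => mhat (Xt' ω)) 2 P) :
    (∫ ω, (y ω - mhat (Xt' ω)) ^ 2 ∂P) - (∫ ω, (y ω - mhat (X ω)) ^ 2 ∂P)
      = (∫ ω, (mhat (Xt ω) - mhat (Xt' ω)) ^ 2 ∂P)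
        + 2 * ∫ ω, (m (Xt ω) - mhat (Xt ω)) * (mhat (Xt ω) - mhat (Xt' ω)) ∂P := by
  have risk_Xt' : ∫ ω, (y ω - mhat (Xt' ω)) ^ 2 ∂P
      = ∫ ω, (m (X ω) - mhat (Xt' ω)) ^ 2 ∂P + ∫ ω, ε ω ^ 2 ∂P := by
    simp only [hy]
    exact integral_add_sub_sq_of_integral_mul_eq_zero h1 hε2 h4 <|
      hεindep.integral_comp_mul_eq_zero (f := fun z => m z.1 - mhat z.2.2)
      hε2.aestronglyMeasurable hε0 (by fun_prop) (h1.sub h4).aestronglyMeasurable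
  have risk_X : ∫ ω, (y ω - mhat (X ω)) ^ 2 ∂P
      = ∫ ω, (m (X ω) - mhat (X ω)) ^ 2 ∂P + ∫ ω, ε ω ^ 2 ∂P := by
    simp only [hy]
    exact integral_add_sub_sq_of_integral_mul_eq_zero h1 hε2 h2 <|
      hεindep.integral_comp_mul_eq_zero (f := fun z => m z.1 - mhat z.1)
      hε2.aestronglyMeasurable hε0 (by fun_prop) (h1.sub h2).aestronglyMeasurable
  have null_Xt' : ∫ ω, (m (X ω) - mhat (Xt' ω)) ^ 2 ∂P
      = ∫ ω, (m (Xt ω) - mhat (Xt' ω)) ^ 2 ∂P :=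
    integral_congr_ae (by filter_upwards [hnull] with ω h; rw [h])
  have equidistributed : ∫ ω, (m (X ω) - mhat (X ω)) ^ 2 ∂P
      = ∫ ω, (m (Xt ω) - mhat (Xt ω)) ^ 2 ∂P :=
    (hXtX.comp ((hm.sub hmhat).pow_const 2)).integral_eq.symm
  have split := integral_add_sq ((h1.ae_eq hnull.symm).sub h3) (h3.sub h4)
  simp only [Pi.sub_apply, sub_add_sub_cancel] at split
  linarith

/-- double robustness of the CPI bias, quadratic loss: under the additive
noise model `y = m(X) + ε` with `ε` independent of `(X, X̃, X̃')` and centered, `X̃ ∼ X`,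
`m(X̃) = m(X)` a.s. (the conditional null), and square-integrability, the expected CPI equals
`E[(m̂(X̃) - m̂(X̃'))²] + 2 E[(m(X̃) - m̂(X̃)) (m̂(X̃) - m̂(X̃'))]`. -/
theorem cpi_bias_decomposition
    {Ω : Type*} [MeasurableSpace Ω] (P : Measure Ω) [IsProbabilityMeasure P]
    {p : ℕ} (X Xt Xt' : Ω → Fin p → ℝ) (y ε : Ω → ℝ)
    (hX : Measurable X) (hXt : Measurable Xt) (hXt' : Measurable Xt')
    (m mhat : (Fin p → ℝ) → ℝ) (hm : Measurable m) (hmhat : Measurable mhat)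
    (hy : ∀ ω, y ω = m (X ω) + ε ω)
    (hεindep : IndepFun ε (fun ω => (X ω, Xt ω, Xt' ω)) P)
    (hε0 : (∫ ω, ε ω ∂P) = 0) (hε2 : MemLp ε 2 P)
    (hXtX : IdentDistrib Xt X P P)
    (hnull : (fun ω => m (Xt ω)) =ᵐ[P] fun ω => m (X ω))
    (h1 : MemLp (fun ω => m (X ω)) 2 P)
    (h2 : MemLp (fun ω => mhat (X ω)) 2 P)
    (h3 : MemLp (fun ω => mhat (Xt ω)) 2 P)
    (h4 : MemLp (fun ω => mhat (Xt' ω)) 2 P) :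
    (∫ ω, (y ω - mhat (Xt' ω)) ^ 2 ∂P) - (∫ ω, (y ω - mhat (X ω)) ^ 2 ∂P)
      = (∫ ω, (mhat (Xt ω) - mhat (Xt' ω)) ^ 2 ∂P)
        + 2 * ∫ ω, (m (Xt ω) - mhat (Xt ω)) * (mhat (Xt ω) - mhat (Xt' ω)) ∂P :=
  cpi_bias_decomposition_general P X Xt Xt' y ε m mhat hm hmhat hy hεindep hε0 hε2 hXtX hnull h1 h2
    h3 h4
end

section
/- Let (X, y) satisfy the additive noise model y = m(X) + ε with ε independent of X, E[ε] = 0 and E[ε²] = σ² < ∞, and suppose m(X) is square-integrable. Let m_{−j}(X^{−j}) := E[y | X^{−j}] (= E[m(X) | X^{−j}] a.s.), and let m̂ : ℝ^p → ℝ and m̂_{−j} : ℝ^{p−1} → ℝ be arbitrary square-integrable fitted functions. Then the expected LOCO statistic satisfies E[(y − m̂_{−j}(X^{−j}))²] − E[(y − m̂(X))²] = ψ_TSI(j) + E[(m_{−j}(X^{−j}) − m̂_{−j}(X^{−j}))²] − E[(m(X) − m̂(X))²], where ψ_TSI(j) = E[(m(X) − m_{−j}(X^{−j}))²] is the quadratic-loss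 Total Sobol Index of coordinate j. -/
/-!
Write `a = m(X)`, and let `G = m_{-j}(X^{-j})`, `H = m̂_{-j}(X^{-j})`, `F = m̂(X)`.
Since `G` is the conditional expectation of `y` given `X^{-j}` and `G - H` is a function of
`X^{-j}`, the residual `y - G` is orthogonal to `G - H` in `L²`, so
`E[(y - H)²] = E[(y - G)²] + E[(G - H)²]`. Since the centred noise `ε = y - a` is independent
of every function of `X`, `E[(y - g(X))²] = E[(a - g(X))²] + σ²` for `g(X) = G` and `g(X) = F`.
The two noise terms `σ²` cancel in the LOCO difference.
-/

open MeasureTheory ProbabilityTheory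

section

variable {Ω : Type*} {m₀ : MeasurableSpace Ω} {μ : Measure Ω}

lemma integral_add_sq_of_integral_mul_eq_zero {u v : Ω → ℝ} (hu : MemLp u 2 μ)
    (hv : MemLp v 2 μ) (huv : ∫ ω, u ω * v ω ∂μ = 0) :
    ∫ ω, (u ω + v ω) ^ 2 ∂μ = ∫ ω, u ω ^ 2 ∂μ + ∫ ω, v ω ^ 2 ∂μ := by
  have huv_int : Integrable (fun ω => 2 * (u ω * v ω)) μ :=
    (hu.integrable_mul hv).const_mul 2
  have hsum : Integrable (fun ω => u ω ^ 2 + 2 * (u ω * v ω)) μ :=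
    hu.integrable_sq.add huv_int
  calc ∫ ω, (u ω + v ω) ^ 2 ∂μ = ∫ ω, u ω ^ 2 + 2 * (u ω * v ω) + v ω ^ 2 ∂μ := by
        congr 1 with ω; ring
    _ = ∫ ω, u ω ^ 2 ∂μ + 2 * ∫ ω, u ω * v ω ∂μ + ∫ ω, v ω ^ 2 ∂μ := by
        rw [integral_add hsum hv.integrable_sq,
          integral_add hu.integrable_sq huv_int, integral_const_mul]
    _ = ∫ ω, u ω ^ 2 ∂μ + ∫ ω, v ω ^ 2 ∂μ := by rw [huv, mul_zero, add_zero]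

lemma IndepFun.integral_add_sq_of_integral_eq_zero {Z ε : Ω → ℝ} (h : IndepFun Z ε μ)
    (hZ : MemLp Z 2 μ) (hε : MemLp ε 2 μ) (hε0 : ∫ ω, ε ω ∂μ = 0) :
    ∫ ω, (Z ω + ε ω) ^ 2 ∂μ = ∫ ω, Z ω ^ 2 ∂μ + ∫ ω, ε ω ^ 2 ∂μ := by
  refine integral_add_sq_of_integral_mul_eq_zero hZ hε ?_
  rw [h.integral_fun_mul_eq_mul_integral hZ.aestronglyMeasurable hε.aestronglyMeasurable, hε0,
    mul_zero]

lemma integral_sub_condExp_mul_eq_zero [IsFiniteMeasure μ] {m : MeasurableSpace Ω}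
    (hm : m ≤ m₀) {f g : Ω → ℝ} (hf : MemLp f 2 μ) (hg : MemLp g 2 μ)
    (hgm : StronglyMeasurable[m] g) :
    ∫ ω, (f ω - μ[f | m] ω) * g ω ∂μ = 0 := by
  have hgf : Integrable (g * f) μ := hg.integrable_mul hf
  have hgcf : Integrable (g * μ[f | m]) μ := hg.integrable_mul (hf.condExp one_le_two)
  have hpull : ∫ ω, (g * μ[f | m]) ω ∂μ = ∫ ω, (g * f) ω ∂μ :=
    calc ∫ ω, (g * μ[f | m]) ω ∂μ = ∫ ω, μ[g * f | m] ω ∂μ :=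
          integral_congr_ae (condExp_mul_of_stronglyMeasurable_left hgm hgf
            (hf.integrable one_le_two)).symm
      _ = ∫ ω, (g * f) ω ∂μ := integral_condExp hm
  calc ∫ ω, (f ω - μ[f | m] ω) * g ω ∂μ = ∫ ω, ((g * f) ω - (g * μ[f | m]) ω) ∂μ := by
        congr 1 with ω; simp only [Pi.mul_apply]; ring
    _ = 0 := by rw [integral_sub hgf hgcf, hpull, sub_self]

lemma integral_sq_sub_comp_eq_of_additive_noise {E : Type*} [MeasurableSpace E] {X : Ω → E}
    {y ε : Ω → ℝ} {f g : E → ℝ} (hf : Measurable f) (hg : Measurable g)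
    (hy : ∀ ω, y ω = f (X ω) + ε ω) (hεX : IndepFun ε X μ) (hε0 : ∫ ω, ε ω ∂μ = 0)
    (hε : MemLp ε 2 μ) (hfX : MemLp (fun ω => f (X ω)) 2 μ)
    (hgX : MemLp (fun ω => g (X ω)) 2 μ) :
    ∫ ω, (y ω - g (X ω)) ^ 2 ∂μ = ∫ ω, (f (X ω) - g (X ω)) ^ 2 ∂μ + ∫ ω, ε ω ^ 2 ∂μ := by
  have key := IndepFun.integral_add_sq_of_integral_eq_zero
    (Z := fun ω => f (X ω) - g (X ω)) (ε := ε)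
    (hεX.symm.comp (hf.sub hg) measurable_id) (hfX.sub hgX) hε hε0
  simpa only [hy, add_sub_right_comm] using key

end

/-- LOCO bias decomposition, quadratic loss: under the additive noise model
`y = m(X) + ε` with `ε ⟂⟂ X`, `E[ε] = 0`, `E[ε²] < ∞`, with `m_{-j}(X^{-j})` a version of
`E[y | X^{-j}]`, and arbitrary square-integrable fitted functions `m̂`, `m̂_{-j}`, the expected
LOCO statistic equals the Total Sobol Index plus the difference of the two estimation errors. -/
theorem loco_bias_decomposition
    {Ω : Type*} [MeasurableSpace Ω] (P : Measure Ω) [IsProbabilityMeasure P]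
    {p : ℕ} (j : Fin p) (X : Ω → Fin p → ℝ) (hX : Measurable X)
    (y ε : Ω → ℝ)
    (m : (Fin p → ℝ) → ℝ) (hm : Measurable m)
    (hy : ∀ ω, y ω = m (X ω) + ε ω)
    (hεindep : IndepFun ε X P) (hε0 : (∫ ω, ε ω ∂P) = 0) (hε2 : MemLp ε 2 P)
    (hmL2 : MemLp (fun ω => m (X ω)) 2 P)
    (mmj : ({i : Fin p // i ≠ j} → ℝ) → ℝ) (hmmj : Measurable mmj)
    (hmmjL2 : MemLp (fun ω => mmj (fun i => X ω i.1)) 2 P)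
    (hcond : (fun ω => mmj (fun i => X ω i.1)) =ᵐ[P]
      P[y | MeasurableSpace.comap (fun ω (i : {i : Fin p // i ≠ j}) => X ω i.1) inferInstance])
    (mhat : (Fin p → ℝ) → ℝ) (mhatmj : ({i : Fin p // i ≠ j} → ℝ) → ℝ)
    (hmhat : Measurable mhat) (hmhatmj : Measurable mhatmj)
    (hmhatL2 : MemLp (fun ω => mhat (X ω)) 2 P)
    (hmhatmjL2 : MemLp (fun ω => mhatmj (fun i => X ω i.1)) 2 P) :
    (∫ ω, (y ω - mhatmj (fun i => X ω i.1)) ^ 2 ∂P) - (∫ ω, (y ω - mhat (X ω)) ^ 2 ∂P)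
      = (∫ ω, (m (X ω) - mmj (fun i => X ω i.1)) ^ 2 ∂P)
        + (∫ ω, (mmj (fun i => X ω i.1) - mhatmj (fun i => X ω i.1)) ^ 2 ∂P)
        - ∫ ω, (m (X ω) - mhat (X ω)) ^ 2 ∂P := by
  set π : Ω → {i : Fin p // i ≠ j} → ℝ := fun ω i => X ω i.1
  set G : Ω → ℝ := fun ω => mmj (π ω)
  set H : Ω → ℝ := fun ω => mhatmj (π ω)
  have hrestrict : Measurable fun (x : Fin p → ℝ) (i : {i : Fin p // i ≠ j}) => x i.1 :=
    measurable_pi_lambda _ fun i => measurable_pi_apply i.1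
  have hπ : Measurable π := hrestrict.comp hX
  have hyL2 : MemLp y 2 P := (hmL2.add hε2).ae_eq (.of_forall fun ω => (hy ω).symm)
  have orthogonal : ∫ ω, (y ω - G ω) * (G ω - H ω) ∂P = 0 := by
    have hGH : StronglyMeasurable[MeasurableSpace.comap π inferInstance] fun ω => G ω - H ω :=
      ((hmmj.comp (comap_measurable π)).sub
        (hmhatmj.comp (comap_measurable π))).stronglyMeasurable
    rw [← integral_sub_condExp_mul_eq_zero hπ.comap_le hyL2 (hmmjL2.sub hmhatmjL2) hGH]
    refine integral_congr_ae ?_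
    filter_upwards [hcond] with ω hω
    rw [Pi.sub_apply, hω]
  have pythagoras := integral_add_sq_of_integral_mul_eq_zero
    (hyL2.sub hmmjL2) (hmmjL2.sub hmhatmjL2) orthogonal
  have hG := integral_sq_sub_comp_eq_of_additive_noise (g := fun x => mmj fun i => x i.1)
    hm (hmmj.comp hrestrict) hy hεindep hε0 hε2 hmL2 hmmjL2
  have hF := integral_sq_sub_comp_eq_of_additive_noise hm hmhat hy hεindep hε0 hε2 hmL2 hmhatL2
  simp only [Pi.sub_apply, sub_add_sub_cancel] at pythagoras
  linarith
end

section
/- Let X ∼ N(0, Σ) in ℝ^p with Σ_{−j,−j} invertible, and y = Xᵀβ + ε with ε ∼ N(0, σ²) independent of X. Let m̂(x) = xᵀβ̂ and m̂_{−j}(x^{−j}) = (x^{−j})ᵀβ̂' be fixed linear predictors, let β' := β_{−j} + β_j γ_{−j} with γ_{−j} = Σ_{−j,−j}^{−1} Σ_{−j,j}, and set Δβ := β − β̂, Δβ' := β' − β̂', Σ_cond^j := Σ_{j,j} − Σ_{j,−j} Σ_{−j,−j}^{−1} Σ_{−j,j}. Then the expected LOCO statistic is E[(y − m̂_{−j}(X^{−j}))²]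 − E[(y − m̂(X))²] = β_j² Σ_cond^j + Δβ'ᵀ Σ_{−j,−j} Δβ' − Δβᵀ Σ Δβ, i.e. it equals the Total Sobol Index ψ_TSI(j) = β_j² Σ_cond^j plus the difference of the two weighted estimation errors ‖Δβ'‖²_{Σ_{−j,−j}} − ‖Δβ‖²_Σ. -/
open MeasureTheory ProbabilityTheory

noncomputable section

/-- `X` is a Gaussian random vector with mean `μ` and covariance matrix `S`. -/
def IsGaussianVec {Ω : Type*} [MeasurableSpace Ω] (P : Measure Ω) {p : ℕ}
    (X : Ω → Fin p → ℝ) (μ : Fin p → ℝ) (S : Matrix (Fin p) (Fin p) ℝ) : Prop :=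
  ∀ a : Fin p → ℝ,
    P.map (fun ω => ∑ i, a i * X ω i) =
      gaussianReal (∑ i, a i * μ i) (Real.toNNReal (∑ i, ∑ k, a i * S i k * a k))

/-!
Each expected squared residual is the second moment of a centred Gaussian: `y - xᵀb = (β - b)ᵀX + ε`
with `ε` independent of `X`, so it equals `‖β - b‖²_Σ + σ²`, and the restricted predictor is the
full one with `b_j = 0`. The noise cancels in the difference, and the Schur complement formula for
the block decomposition of `Σ` into `-j` and `j` gives
`‖c‖²_Σ = c_j² Σ_cond^j + ‖c_{-j} + c_j γ_{-j}‖²_{Σ_{-j,-j}}`; for `c = β - b` with `b_j = 0` and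
`b_{-j} = β̂'` the last vector is `Δβ'`.
-/

open Matrix
open scoped NNReal

section Schur

variable {ι R : Type*} [DecidableEq ι] [CommRing R] [StarRing R] [TrivialStar R]

def Equiv.subtypeNeSumUnit (j : ι) : {i // i ≠ j} ⊕ Unit ≃ ι :=
  (Equiv.optionEquivSumPUnit.{0} _).symm.trans (Equiv.optionSubtypeNe j)

theorem Matrix.IsSymm.submatrix_subtypeNeSumUnit {S : Matrix ι ι R} (hS : S.IsSymm) (j : ι) :
    S.submatrix (Equiv.subtypeNeSumUnit j) (Equiv.subtypeNeSumUnit j) =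
      Matrix.fromBlocks (S.submatrix (Subtype.val : {i // i ≠ j} → ι) Subtype.val)
        (of fun (i : {i // i ≠ j}) (_ : Unit) => S i j)
        (of fun (i : {i // i ≠ j}) (_ : Unit) => S i j)ᴴ (of fun (_ _ : Unit) => S j j) := by
  ext (i | i) (k | k) <;> simp [Equiv.subtypeNeSumUnit, hS.apply j]

variable [Fintype ι]

theorem Matrix.IsSymm.dotProduct_mulVec_eq_schur_complement_ne {S : Matrix ι ι R}
    (hS : S.IsSymm) (j : ι)
    (hA : IsUnit (S.submatrix (Subtype.val : {i // i ≠ j} → ι) Subtype.val).det)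
    {γ : {i // i ≠ j} → R}
    (hγ : γ = (S.submatrix Subtype.val Subtype.val)⁻¹ *ᵥ fun i : {i // i ≠ j} => S i j)
    (c : ι → R) :
    c ⬝ᵥ S *ᵥ c = c j ^ 2 * (S j j - (fun i : {i // i ≠ j} => S j i) ⬝ᵥ γ)
      + (fun i : {i // i ≠ j} => c i + c j * γ i) ⬝ᵥ
          S.submatrix Subtype.val Subtype.val *ᵥ fun i => c i + c j * γ i := by
  set A : Matrix {i // i ≠ j} {i // i ≠ j} R := S.submatrix Subtype.val Subtype.val
  have : Invertible A := invertibleOfIsUnitDet A hA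
  set B : Matrix {i // i ≠ j} Unit R := of fun i _ => S i j
  have hc : c ∘ Equiv.subtypeNeSumUnit j = (fun i : {i // i ≠ j} => c i) ⊕ᵥ fun _ => c j := by
    ext (i | i) <;> rfl
  have hΔ : (fun i : {i // i ≠ j} => c i) + (A⁻¹ * B) *ᵥ (fun _ => c j) =
      fun i : {i // i ≠ j} => c i + c j * γ i := by
    have hB : B *ᵥ (fun _ => c j) = c j • fun i : {i // i ≠ j} => S i j := by
      ext i
      simp [B, mulVec, dotProduct, mul_comm]
    rw [← mulVec_mulVec, hB, mulVec_smul, hγ]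
    rfl
  have hschur := schur_complement_eq₁₁ (A := A) B (of fun (_ _ : Unit) => S j j)
    (fun i : {i // i ≠ j} => c i) (fun _ => c j) (isHermitian_iff_isSymm.2 (hS.submatrix _))
  rw [← hS.submatrix_subtypeNeSumUnit, ← hc, star_trivial, ← dotProduct_mulVec,
    submatrix_mulVec_equiv, Function.comp_assoc, Equiv.self_comp_symm, Function.comp_id,
    comp_equiv_dotProduct_comp_equiv, hΔ, star_trivial, ← dotProduct_mulVec, add_comm] at hschur
  rw [hschur]
  congr 1
  simp only [dotProduct, Finset.univ_unique, PUnit.default_eq_unit, vecMul, Pi.star_apply,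
    star_trivial, hS.apply j, conjTranspose_eq_transpose_of_trivial, sub_apply, of_apply,
    mul_apply, transpose_apply, Finset.sum_mul, Finset.sum_const, Finset.card_singleton, one_smul,
    hγ, mulVec, Finset.mul_sum, B]
  rw [Finset.sum_comm]
  simp only [mul_assoc]
  ring

end Schur

theorem Matrix.sum_sum_mul_mul_eq_dotProduct_mulVec {R m n : Type*} [Fintype m] [Fintype n]
    [NonUnitalSemiring R] (a : m → R) (M : Matrix m n R) (b : n → R) :
    ∑ i, ∑ k, a i * M i k * b k = a ⬝ᵥ M *ᵥ b := by
  simp [dotProduct, mulVec, Finset.mul_sum, mul_assoc]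

theorem integral_sq_gaussianReal_zero (v : ℝ≥0) : ∫ x, x ^ 2 ∂gaussianReal 0 v = v := by
  simpa [variance_eq_integral measurable_id.aemeasurable] using
    variance_id_gaussianReal (μ := 0) (v := v)

theorem integral_sq_of_map_eq_gaussianReal {Ω : Type*} [MeasurableSpace Ω] {P : Measure Ω}
    {W : Ω → ℝ} {v : ℝ≥0} (hW : P.map W = gaussianReal 0 v) : ∫ ω, W ω ^ 2 ∂P = v := by
  have hmeas : AEMeasurable W P := .of_map_ne_zero (hW ▸ IsProbabilityMeasure.ne_zero _)
  rw [← integral_sq_gaussianReal_zero, ← hW, integral_map hmeas (by fun_prop)]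

theorem IsGaussianVec.integral_sq_sub_linear {Ω : Type*} [MeasurableSpace Ω] {P : Measure Ω}
    {p : ℕ} {X : Ω → Fin p → ℝ} {S : Matrix (Fin p) (Fin p) ℝ} (hX : IsGaussianVec P X 0 S)
    (hS : S.PosSemidef) {ε : Ω → ℝ} {v : ℝ≥0} (hε : P.map ε = gaussianReal 0 v)
    (hεX : IndepFun ε X P) {β : Fin p → ℝ} {y : Ω → ℝ}
    (hy : ∀ ω, y ω = (∑ i, X ω i * β i) + ε ω) (b : Fin p → ℝ) :
    ∫ ω, (y ω - ∑ i, X ω i * b i) ^ 2 ∂P = (β - b) ⬝ᵥ S *ᵥ (β - b) + v := by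
  set Z : Ω → ℝ := fun ω => ∑ i, (β - b) i * X ω i
  have hres : ∀ ω, y ω - ∑ i, X ω i * b i = Z ω + ε ω := by
    intro ω
    simp only [Z, hy, Pi.sub_apply, sub_mul, Finset.sum_sub_distrib, mul_comm (X ω _)]
    ring
  have hZ : P.map Z = gaussianReal 0 ((β - b) ⬝ᵥ S *ᵥ (β - b)).toNNReal := by
    simpa only [Pi.zero_apply, mul_zero, Finset.sum_const_zero,
      sum_sum_mul_mul_eq_dotProduct_mulVec] using hX (β - b)
  have hZε : IndepFun Z ε P :=
    hεX.symm.comp (φ := fun x : Fin p → ℝ => ∑ i, (β - b) i * x i) (by fun_prop) measurable_id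
  have hlaw := gaussianReal_add_gaussianReal_of_indepFun hZε hZ hε
  rw [zero_add] at hlaw
  simp only [hres, ← Pi.add_apply Z ε, integral_sq_of_map_eq_gaussianReal hlaw, NNReal.coe_add,
    Real.coe_toNNReal _ (by simpa only [star_trivial] using hS.dotProduct_mulVec_nonneg (β - b))]

theorem loco_bias_gaussian_linear_general
    {Ω : Type*} [MeasurableSpace Ω] (P : Measure Ω)
    {p : ℕ} (j : Fin p) (X : Ω → Fin p → ℝ)
    (S : Matrix (Fin p) (Fin p) ℝ) (hS : S.PosSemidef)
    (hGauss : IsGaussianVec P X 0 S)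
    (Smm : Matrix {i : Fin p // i ≠ j} {i : Fin p // i ≠ j} ℝ)
    (hSmm : Smm = Matrix.of fun i k => S i.1 k.1)
    (hinv : IsUnit Smm.det)
    (β : Fin p → ℝ) (v : NNReal) (ε : Ω → ℝ)
    (hεlaw : P.map ε = gaussianReal 0 v)
    (hεindep : IndepFun ε X P)
    (y : Ω → ℝ) (hy : ∀ ω, y ω = (∑ i, X ω i * β i) + ε ω)
    (γ : {i : Fin p // i ≠ j} → ℝ)
    (hγ : γ = fun i => ∑ k : {i : Fin p // i ≠ j}, Smm⁻¹ i k * S k.1 j)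
    (Scond : ℝ)
    (hScond : Scond = S j j - ∑ i : {i : Fin p // i ≠ j}, ∑ k : {i : Fin p // i ≠ j},
        S j i.1 * Smm⁻¹ i k * S k.1 j)
    (β' : {i : Fin p // i ≠ j} → ℝ) (hβ' : β' = fun i => β i.1 + β j * γ i)
    (βhat : Fin p → ℝ) (βhat' : {i : Fin p // i ≠ j} → ℝ)
    (Δβ : Fin p → ℝ) (hΔβ : Δβ = fun i => β i - βhat i)
    (Δβ' : {i : Fin p // i ≠ j} → ℝ) (hΔβ' : Δβ' = fun i => β' i - βhat' i) :
    (∫ ω, (y ω - ∑ i : {i : Fin p // i ≠ j}, X ω i.1 * βhat' i) ^ 2 ∂P)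
      - (∫ ω, (y ω - ∑ i, X ω i * βhat i) ^ 2 ∂P)
      = β j ^ 2 * Scond
        + (∑ i : {i : Fin p // i ≠ j}, ∑ k : {i : Fin p // i ≠ j},
            Δβ' i * S i.1 k.1 * Δβ' k)
        - ∑ i, ∑ k, Δβ i * S i k * Δβ k := by
  obtain rfl : Smm = S.submatrix Subtype.val Subtype.val := hSmm
  set βhatExt : Fin p → ℝ := fun i => if h : i = j then 0 else βhat' ⟨i, h⟩
  have hext_j : βhatExt j = 0 := dif_pos rfl
  have hext_ne : ∀ i : {i // i ≠ j}, βhatExt i = βhat' i := fun i => dif_neg i.2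
  have hrestr : ∀ ω, ∑ i : {i // i ≠ j}, X ω i * βhat' i = ∑ i, X ω i * βhatExt i := by
    intro ω
    simp only [Fintype.sum_eq_add_sum_subtype_ne _ j, hext_j, hext_ne, mul_zero, zero_add]
  have hΔβ'_eq : Δβ' = fun i : {i // i ≠ j} => (β - βhatExt) i + (β - βhatExt) j * γ i := by
    subst hΔβ' hβ'
    funext i
    simp only [Pi.sub_apply, hext_j, hext_ne, sub_zero]
    ring
  have hScond_dot : Scond = S j j - (fun i : {i // i ≠ j} => S j i) ⬝ᵥ γ := by
    rw [hScond, hγ, sum_sum_mul_mul_eq_dotProduct_mulVec]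
    rfl
  have hΔβ'_quad : ∑ i, ∑ k, Δβ' i * S i.1 k.1 * Δβ' k =
      Δβ' ⬝ᵥ S.submatrix Subtype.val Subtype.val *ᵥ Δβ' :=
    sum_sum_mul_mul_eq_dotProduct_mulVec _ _ _
  have hschur := (isHermitian_iff_isSymm.1 hS.1).dotProduct_mulVec_eq_schur_complement_ne j hinv
    hγ (β - βhatExt)
  have hmse := hGauss.integral_sq_sub_linear hS hεlaw hεindep hy
  simp only [hrestr, hmse]
  rw [hΔβ'_quad, sum_sum_mul_mul_eq_dotProduct_mulVec, hschur, hΔβ'_eq, hScond_dot,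
    show Δβ = β - βhat from hΔβ, Pi.sub_apply, hext_j, sub_zero]
  ring

/-- expected LOCO in the Gaussian linear model: for `X ∼ N(0, S)`,
`y = Xᵀβ + ε` with `ε ∼ N(0, v)` independent of `X`, and fixed linear predictors `xᵀβ̂`,
`(x^{-j})ᵀβ̂'`, the expected LOCO statistic equals the Total Sobol Index `β_j² S_cond` plus
`‖Δβ'‖²_{S_{-j,-j}} - ‖Δβ‖²_S`, where `Δβ = β - β̂` and `Δβ' = β' - β̂'` with
`β' = β_{-j} + β_j S_{-j,-j}⁻¹ S_{-j,j}`. -/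
theorem loco_bias_gaussian_linear
    {Ω : Type*} [MeasurableSpace Ω] (P : Measure Ω) [IsProbabilityMeasure P]
    {p : ℕ} (j : Fin p) (X : Ω → Fin p → ℝ) (hX : Measurable X)
    (S : Matrix (Fin p) (Fin p) ℝ) (hS : S.PosSemidef)
    (hGauss : IsGaussianVec P X 0 S)
    (Smm : Matrix {i : Fin p // i ≠ j} {i : Fin p // i ≠ j} ℝ)
    (hSmm : Smm = Matrix.of fun i k => S i.1 k.1)
    (hinv : IsUnit Smm.det)
    (β : Fin p → ℝ) (v : NNReal) (ε : Ω → ℝ) (hε : Measurable ε)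
    (hεlaw : P.map ε = gaussianReal 0 v)
    (hεindep : IndepFun ε X P)
    (y : Ω → ℝ) (hy : ∀ ω, y ω = (∑ i, X ω i * β i) + ε ω)
    (γ : {i : Fin p // i ≠ j} → ℝ)
    (hγ : γ = fun i => ∑ k : {i : Fin p // i ≠ j}, Smm⁻¹ i k * S k.1 j)
    (Scond : ℝ)
    (hScond : Scond = S j j - ∑ i : {i : Fin p // i ≠ j}, ∑ k : {i : Fin p // i ≠ j},
        S j i.1 * Smm⁻¹ i k * S k.1 j)
    (β' : {i : Fin p // i ≠ j} → ℝ) (hβ' : β' = fun i => β i.1 + β j * γ i)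
    (βhat : Fin p → ℝ) (βhat' : {i : Fin p // i ≠ j} → ℝ)
    (Δβ : Fin p → ℝ) (hΔβ : Δβ = fun i => β i - βhat i)
    (Δβ' : {i : Fin p // i ≠ j} → ℝ) (hΔβ' : Δβ' = fun i => β' i - βhat' i) :
    (∫ ω, (y ω - ∑ i : {i : Fin p // i ≠ j}, X ω i.1 * βhat' i) ^ 2 ∂P)
      - (∫ ω, (y ω - ∑ i, X ω i * βhat i) ^ 2 ∂P)
      = β j ^ 2 * Scond
        + (∑ i : {i : Fin p // i ≠ j}, ∑ k : {i : Fin p // i ≠ j},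
            Δβ' i * S i.1 k.1 * Δβ' k)
        - ∑ i, ∑ k, Δβ i * S i k * Δβ k :=
  loco_bias_gaussian_linear_general P j X S hS hGauss Smm hSmm hinv β v ε hεlaw hεindep y hy γ hγ
    Scond hScond β' hβ' βhat βhat' Δβ hΔβ Δβ' hΔβ'
end
end

section
/- Let X and X' be i.i.d. centered Gaussian vectors in ℝ^p with covariance Σ. Fix vectors γ, γ̂ ∈ ℝ^{p−1} and β̂ ∈ ℝ^p, and define the two imputed vectors X̃ and X̃' by X̃^{−j} = X̃'^{−j} = X^{−j}, X̃^j = γᵀX^{−j} + (X'^j − γᵀX'^{−j}) and X̃'^j = γ̂ᵀX^{−j} + (X'^j − γ̂ᵀX'^{−j}). Then for the linear predictor m̂(x) = xᵀβ̂, E[(m̂(X̃) − m̂(X̃'))²] = 2 β̂_j² (γ − γ̂)ᵀ Σ_{−j,−j} (γ − γ̂). In particular, the leading bias term of CPI in the Gaussian linear model is the product of the squared estimated coefficient β̂_j² and the weighted estimation error ‖γ − γ̂‖²_{Σ_{−j,−j}} of the conditional-mean regression, which is the source of CPI's quadratic (doubly robust) bias decay under the conditional null. -/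
/-!
The two imputations differ only in coordinate `j`, by `δᵀX^{-j} - δᵀX'^{-j}` with `δ = γ - γ̂`
(the `X'^j` terms cancel, the regression parts of the residuals do not). Hence
`m̂(X̃) - m̂(X̃') = β̂_j (Z - Z')` with `Z = δᵀX^{-j}` and `Z' = δᵀX'^{-j}` independent copies of
a centered Gaussian of variance `δᵀΣ_{-j,-j}δ`, and `E[(Z - Z')²] = 2 Var Z`.
-/

open MeasureTheory ProbabilityTheory

noncomputable section

section LinearAlgebra

variable {ι R : Type*} [Fintype ι] {q : ι → Prop} [DecidablePred q]

lemma Fintype.sum_extend_val_mul [NonUnitalNonAssocSemiring R] (d : Subtype q → R) (x : ι → R) :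
    ∑ i, Subtype.val.extend d 0 i * x i = ∑ i : Subtype q, d i * x i := by
  rw [← Fintype.sum_subtype_add_sum_subtype q, Fintype.sum_eq_zero (fun i : {i // ¬q i} => _),
    add_zero]
  · simp only [Subtype.val_injective.extend_apply]
  · intro i
    rw [Function.extend_apply' _ _ _ (fun ⟨k, hk⟩ => i.2 (hk ▸ k.2)), Pi.zero_apply, zero_mul]

lemma Fintype.sum_sum_extend_val_mul_mul [CommSemiring R] (d : Subtype q → R)
    (S : Matrix ι ι R) :
    ∑ i, ∑ k, Subtype.val.extend d 0 i * S i k * Subtype.val.extend d 0 k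
      = ∑ i : Subtype q, ∑ k : Subtype q, d i * S i k * d k := by
  have hinner (i : ι) : ∑ k, Subtype.val.extend d 0 i * S i k * Subtype.val.extend d 0 k
      = Subtype.val.extend d 0 i * ∑ k : Subtype q, d k * S i k := by
    simp only [mul_assoc, ← Finset.mul_sum, mul_comm (S i _), Fintype.sum_extend_val_mul]
  simp only [hinner]
  rw [Fintype.sum_extend_val_mul]
  simp only [Finset.mul_sum]
  exact Finset.sum_congr rfl fun i _ => Finset.sum_congr rfl fun k _ => by ring

lemma Fintype.sum_update_mul_sub_sum_update_mul [DecidableEq ι] [NonUnitalNonAssocRing R]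
    (x β : ι → R) (j : ι) (y y' : R) :
    ∑ i, Function.update x j y i * β i - ∑ i, Function.update x j y' i * β i
      = (y - y') * β j := by
  rw [← Finset.sum_sub_distrib, Fintype.sum_eq_single j fun i hi => by
    simp only [Function.update_of_ne hi, sub_self]]
  simp only [Function.update_self, sub_mul]

lemma Matrix.PosSemidef.sum_sum_mul_mul_nonneg {S : Matrix ι ι ℝ} (hS : S.PosSemidef)
    (a : ι → ℝ) : 0 ≤ ∑ i, ∑ k, a i * S i k * a k := by
  simpa [dotProduct, Matrix.mulVec, Finset.mul_sum, mul_assoc] using hS.dotProduct_mulVec_nonneg a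

end LinearAlgebra

section Probability

variable {Ω : Type*} [MeasurableSpace Ω] {P : Measure Ω}

lemma IsGaussianVec.hasLaw_sum_mul {p : ℕ} {X : Ω → Fin p → ℝ} {μ : Fin p → ℝ}
    {S : Matrix (Fin p) (Fin p) ℝ} (hX : IsGaussianVec P X μ S) (a : Fin p → ℝ) :
    HasLaw (fun ω => ∑ i, a i * X ω i)
      (gaussianReal (∑ i, a i * μ i) (∑ i, ∑ k, a i * S i k * a k).toNNReal) P where
  aemeasurable := .of_map_ne_zero <| hX a ▸ IsProbabilityMeasure.ne_zero _
  map_eq := hX a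

lemma IndepFun.integral_sq_sub_of_identDistrib [IsProbabilityMeasure P] {Z Z' : Ω → ℝ}
    (hZ : MemLp Z 2 P) (hind : Z ⟂ᵢ[P] Z') (hid : IdentDistrib Z Z' P P) :
    ∫ ω, (Z ω - Z' ω) ^ 2 ∂P = 2 * Var[Z; P] := by
  have hZ' : MemLp Z' 2 P := hid.memLp_snd hZ
  have hmean : P[fun ω => Z ω - Z' ω] = 0 := by
    rw [integral_sub (hZ.integrable one_le_two) (hZ'.integrable one_le_two), hid.integral_eq,
      sub_self]
  rw [← variance_of_integral_eq_zero (X := fun ω => Z ω - Z' ω)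
      (hZ.aemeasurable.sub hZ'.aemeasurable) hmean,
    variance_fun_sub hZ hZ', hind.covariance_eq_zero hZ hZ', hid.variance_eq]
  ring

end Probability

theorem cpi_leading_bias_gaussian_linear_general
    {Ω : Type*} [MeasurableSpace Ω] (P : Measure Ω) [IsProbabilityMeasure P]
    {p : ℕ} (j : Fin p) (X X' : Ω → Fin p → ℝ)
    (hindep : IndepFun X X' P) (hid : IdentDistrib X X' P P)
    (S : Matrix (Fin p) (Fin p) ℝ) (hS : S.PosSemidef)
    (hGauss : IsGaussianVec P X 0 S)
    (γ γhat : {i : Fin p // i ≠ j} → ℝ) (βhat : Fin p → ℝ)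
    (Xt Xt' : Ω → Fin p → ℝ)
    (hXt : ∀ ω, Xt ω = Function.update (X ω) j
      ((∑ i : {i : Fin p // i ≠ j}, γ i * X ω i.1)
        + (X' ω j - ∑ i : {i : Fin p // i ≠ j}, γ i * X' ω i.1)))
    (hXt' : ∀ ω, Xt' ω = Function.update (X ω) j
      ((∑ i : {i : Fin p // i ≠ j}, γhat i * X ω i.1)
        + (X' ω j - ∑ i : {i : Fin p // i ≠ j}, γhat i * X' ω i.1)))
    (mhat : (Fin p → ℝ) → ℝ) (hmhat : ∀ x, mhat x = ∑ i, x i * βhat i) :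
    (∫ ω, (mhat (Xt ω) - mhat (Xt' ω)) ^ 2 ∂P)
      = 2 * βhat j ^ 2 * ∑ i : {i : Fin p // i ≠ j}, ∑ k : {i : Fin p // i ≠ j},
          (γ i - γhat i) * S i.1 k.1 * (γ k - γhat k) := by
  set a : Fin p → ℝ := Subtype.val.extend (fun i => γ i - γhat i) 0
  set proj : (Fin p → ℝ) → ℝ := fun x => ∑ i, a i * x i
  have hproj : Measurable proj := by fun_prop
  have hdiff : ∀ ω, mhat (Xt ω) - mhat (Xt' ω) = βhat j * ((proj ∘ X) ω - (proj ∘ X') ω) := by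
    intro ω
    simp only [Function.comp_apply, proj, a, hmhat, hXt, hXt',
      Fintype.sum_update_mul_sub_sum_update_mul, Fintype.sum_extend_val_mul, sub_mul,
      Finset.sum_sub_distrib]
    ring
  have hlaw : HasLaw (proj ∘ X) (gaussianReal 0 (∑ i, ∑ k, a i * S i k * a k).toNNReal) P := by
    have h := hGauss.hasLaw_sum_mul a
    simp only [Pi.zero_apply, mul_zero, Finset.sum_const_zero] at h
    exact h
  calc (∫ ω, (mhat (Xt ω) - mhat (Xt' ω)) ^ 2 ∂P)
      = βhat j ^ 2 * ∫ ω, ((proj ∘ X) ω - (proj ∘ X') ω) ^ 2 ∂P := by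
        simp only [hdiff, mul_pow, integral_const_mul]
    _ = βhat j ^ 2 * (2 * Var[proj ∘ X; P]) := by
        rw [IndepFun.integral_sq_sub_of_identDistrib hlaw.hasGaussianLaw.memLp_two
          (hindep.comp hproj hproj) (hid.comp hproj)]
    _ = _ := by
        rw [hlaw.variance_eq, variance_id_gaussianReal, Real.coe_toNNReal _ (hS.sum_sum_mul_mul_nonneg a),
          Fintype.sum_sum_extend_val_mul_mul]
        ring

/-- leading bias term of CPI in the Gaussian linear model: for i.i.d.
centered Gaussian vectors `X, X'` with covariance `S`, linear imputations of coordinate `j`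
built from the true coefficients `γ` and estimated coefficients `γ̂` (both using the residual
of the independent copy), and a linear predictor `m̂(x) = xᵀβ̂`,
`E[(m̂(X̃) - m̂(X̃'))²] = 2 β̂_j² (γ - γ̂)ᵀ S_{-j,-j} (γ - γ̂)`. -/
theorem cpi_leading_bias_gaussian_linear
    {Ω : Type*} [MeasurableSpace Ω] (P : Measure Ω) [IsProbabilityMeasure P]
    {p : ℕ} (j : Fin p) (X X' : Ω → Fin p → ℝ)
    (hX : Measurable X) (hX' : Measurable X')
    (hindep : IndepFun X X' P) (hid : IdentDistrib X X' P P)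
    (S : Matrix (Fin p) (Fin p) ℝ) (hS : S.PosSemidef)
    (hGauss : IsGaussianVec P X 0 S)
    (γ γhat : {i : Fin p // i ≠ j} → ℝ) (βhat : Fin p → ℝ)
    (Xt Xt' : Ω → Fin p → ℝ)
    (hXt : ∀ ω, Xt ω = Function.update (X ω) j
      ((∑ i : {i : Fin p // i ≠ j}, γ i * X ω i.1)
        + (X' ω j - ∑ i : {i : Fin p // i ≠ j}, γ i * X' ω i.1)))
    (hXt' : ∀ ω, Xt' ω = Function.update (X ω) j
      ((∑ i : {i : Fin p // i ≠ j}, γhat i * X ω i.1)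
        + (X' ω j - ∑ i : {i : Fin p // i ≠ j}, γhat i * X' ω i.1)))
    (mhat : (Fin p → ℝ) → ℝ) (hmhat : ∀ x, mhat x = ∑ i, x i * βhat i) :
    (∫ ω, (mhat (Xt ω) - mhat (Xt' ω)) ^ 2 ∂P)
      = 2 * βhat j ^ 2 * ∑ i : {i : Fin p // i ≠ j}, ∑ k : {i : Fin p // i ≠ j},
          (γ i - γhat i) * S i.1 k.1 * (γ k - γhat k) :=
  cpi_leading_bias_gaussian_linear_general P j X X' hindep hid S hS hGauss γ γhat βhat Xt Xt' hXt
    hXt' mhat hmhat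

end
end

section
/- Let X be a random vector in ℝ^p, m : ℝ^p → ℝ with m(X) square-integrable, and m_{−j}(X^{−j}) := E[m(X) | X^{−j}]. Let X̃_i and X̃_k (i ≠ k) be two conditional resamples of coordinate j of X: X̃_i^{−j} = X̃_k^{−j} = X^{−j}, and conditionally on X^{−j} the coordinates X̃_i^j and X̃_k^j are i.i.d. with the conditional law of X^j given X^{−j} and conditionally independent of X^j. Then E[(m(X) − m(X̃_i))(m(X) − m(X̃_k))] = ψ_TSI(j), where ψ_TSI(j) = E[(m(X) − m_{−j}(X^{−j}))²]. -/
open MeasureTheory ProbabilityTheory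

/-!
Write `W = X^{-j}`, `m(X) = f(W, X^j)`, and let `κ` be the conditional law of `X^j` given `W`, so
that `E[m(X) | W] = g(W)` with `g(w) = ∫ f(w, y) κ_w(dy)`. By conditional independence, any two of
`X^j, X̃ᵢ^j, X̃ₖ^j` have conditional joint law `κ_W ⊗ κ_W` given `W`, so each of the three mixed
products in the expansion of `(m(X) - m(X̃ᵢ)) (m(X) - m(X̃ₖ))` has expectation `E[g(W)²]`. The left
side is therefore `E[m(X)²] - E[g(W)²]`, which is also `E[(m(X) - E[m(X) | W])²]`.
-/

lemma measurable_funSplitAt_symm {ι γ : Type*} [DecidableEq ι] [MeasurableSpace γ] (j : ι) :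
    Measurable (Equiv.funSplitAt j γ).symm := by
  refine measurable_pi_lambda _ fun i ↦ ?_
  by_cases h : i = j
  · subst h
    simpa using measurable_fst
  · simp only [Equiv.funSplitAt_symm_apply, dif_neg h]
    fun_prop

lemma funSplitAt_symm_apply_of_forall_ne {ι γ : Type*} [DecidableEq ι] {j : ι} {x y : ι → γ}
    (h : ∀ l, l ≠ j → x l = y l) :
    (Equiv.funSplitAt j γ).symm (x j, fun k ↦ y k) = x := by
  rw [Equiv.symm_apply_eq]
  ext k
  · rfl
  · exact (h k k.2).symm

lemma integral_sub_condExp_sq {Ω : Type*} {m m₀ : MeasurableSpace Ω} {μ : Measure Ω}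
    [IsFiniteMeasure μ] (hm : m ≤ m₀) {X : Ω → ℝ} (hX : MemLp X 2 μ) :
    ∫ ω, (X ω - μ[X | m] ω) ^ 2 ∂μ = ∫ ω, X ω ^ 2 ∂μ - ∫ ω, μ[X | m] ω ^ 2 ∂μ := by
  calc ∫ ω, (X ω - μ[X | m] ω) ^ 2 ∂μ = ∫ ω, Var[X; μ | m] ω ∂μ := (integral_condExp hm).symm
    _ = ∫ ω, (μ[X ^ 2 | m] ω - μ[X | m] ω ^ 2) ∂μ :=
        integral_congr_ae (condVar_ae_eq_condExp_sq_sub_sq_condExp hm hX)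
    _ = ∫ ω, X ω ^ 2 ∂μ - ∫ ω, μ[X | m] ω ^ 2 ∂μ := by
        rw [integral_sub integrable_condExp (hX.condExp one_le_two).integrable_sq,
          integral_condExp hm]
        rfl

section Resample

variable {Ω β γ : Type*} {mΩ : MeasurableSpace Ω}
  {mβ : MeasurableSpace β} {mγ : MeasurableSpace γ} [StandardBorelSpace γ] [Nonempty γ]
  {μ : Measure Ω} [IsFiniteMeasure μ] {W : Ω → β} {A B Y : Ω → γ}

lemma map_prodMk_eq_of_condDistrib_ae_eq (hA : Measurable A) (hY : Measurable Y)
    (hAY : condDistrib A W μ =ᵐ[μ.map W] condDistrib Y W μ) :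
    μ.map (fun ω ↦ (W ω, A ω)) = μ.map (fun ω ↦ (W ω, Y ω)) := by
  rw [(condDistrib_ae_eq_iff_measure_eq_compProd W hA.aemeasurable _).1 hAY,
    compProd_map_condDistrib hY.aemeasurable]

lemma memLp_comp_prodMk_of_condDistrib_ae_eq {E : Type*} [NormedAddCommGroup E] {p : ENNReal}
    (hW : Measurable W) (hA : Measurable A) (hY : Measurable Y)
    (hAY : condDistrib A W μ =ᵐ[μ.map W] condDistrib Y W μ)
    {f : β × γ → E} (hf : StronglyMeasurable f) (hfY : MemLp (fun ω ↦ f (W ω, Y ω)) p μ) :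
    MemLp (fun ω ↦ f (W ω, A ω)) p μ := by
  have h := (memLp_map_measure_iff hf.aestronglyMeasurable (hW.prodMk hY).aemeasurable).2 hfY
  rw [← map_prodMk_eq_of_condDistrib_ae_eq hA hY hAY] at h
  exact (memLp_map_measure_iff hf.aestronglyMeasurable (hW.prodMk hA).aemeasurable).1 h

variable [StandardBorelSpace Ω]

lemma condDistrib_prodMk_ae_eq_of_condIndepFun (hW : Measurable W) (hA : Measurable A)
    (hB : Measurable B) (hAB : CondIndepFun (mβ.comap W) hW.comap_le A B μ) :
    condDistrib (fun ω ↦ (A ω, B ω)) W μ =ᵐ[μ.map W] condDistrib A W μ ×ₖ condDistrib B W μ := by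
  refine condDistrib_ae_eq_of_measure_eq_compProd W (hA.prodMk hB).aemeasurable ?_
  rw [(condIndepFun_iff_map_prod_eq_prod_condDistrib_prod_condDistrib hA hB hW).1 hAB,
    Measure.compProd_eq_comp_prod]

lemma integral_mul_of_condIndepFun
    (hW : Measurable W) (hA : Measurable A)
    (hB : Measurable B) (hAB : CondIndepFun (mβ.comap W) hW.comap_le A B μ)
    {f g : β × γ → ℝ} (hf : StronglyMeasurable f) (hg : StronglyMeasurable g)
    (hfg : Integrable (fun ω ↦ f (W ω, A ω) * g (W ω, B ω)) μ) :
    ∫ ω, f (W ω, A ω) * g (W ω, B ω) ∂μ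
      = ∫ ω, (∫ a, f (W ω, a) ∂condDistrib A W μ (W ω))
          * ∫ b, g (W ω, b) ∂condDistrib B W μ (W ω) ∂μ := by
  have hmeas : StronglyMeasurable fun q : β × γ × γ ↦ f (q.1, q.2.1) * g (q.1, q.2.2) :=
    (hf.comp_measurable (by fun_prop)).mul (hg.comp_measurable (by fun_prop))
  have hcondExp :=
    condExp_prod_ae_eq_integral_condDistrib hW (hA.prodMk hB).aemeasurable hmeas hfg
  have hprod :=
    ae_of_ae_map hW.aemeasurable (condDistrib_prodMk_ae_eq_of_condIndepFun hW hA hB hAB)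
  calc ∫ ω, f (W ω, A ω) * g (W ω, B ω) ∂μ
      = ∫ ω, μ[fun ω ↦ f (W ω, A ω) * g (W ω, B ω) | mβ.comap W] ω ∂μ :=
        (integral_condExp hW.comap_le).symm
    _ = _ := by
        refine integral_congr_ae ?_
        filter_upwards [hcondExp, hprod] with ω hω hωAB
        rw [hω, hωAB, Kernel.prod_apply]
        exact integral_prod_mul (fun a ↦ f (W ω, a)) (fun b ↦ g (W ω, b))

lemma integral_mul_of_condIndepFun_of_condDistrib_ae_eq
    (hW : Measurable W) (hA : Measurable A) (hB : Measurable B) (hY : Measurable Y)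
    (hAB : CondIndepFun (mβ.comap W) hW.comap_le A B μ)
    (hAY : condDistrib A W μ =ᵐ[μ.map W] condDistrib Y W μ)
    (hBY : condDistrib B W μ =ᵐ[μ.map W] condDistrib Y W μ)
    {f : β × γ → ℝ} (hf : StronglyMeasurable f) (hfY : MemLp (fun ω ↦ f (W ω, Y ω)) 2 μ) :
    ∫ ω, f (W ω, A ω) * f (W ω, B ω) ∂μ
      = ∫ ω, (∫ y, f (W ω, y) ∂condDistrib Y W μ (W ω)) ^ 2 ∂μ := by
  rw [integral_mul_of_condIndepFun hW hA hB hAB hf hf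
    ((memLp_comp_prodMk_of_condDistrib_ae_eq hW hA hY hAY hf hfY).integrable_mul
      (memLp_comp_prodMk_of_condDistrib_ae_eq hW hB hY hBY hf hfY))]
  refine integral_congr_ae ?_
  filter_upwards [ae_of_ae_map hW.aemeasurable hAY, ae_of_ae_map hW.aemeasurable hBY]
    with ω hωA hωB
  rw [hωA, hωB, sq]

theorem integral_mul_sub_resample_eq_integral_sub_condExp_sq
    (hW : Measurable W) (hA : Measurable A) (hB : Measurable B) (hY : Measurable Y)
    (hYB : CondIndepFun (mβ.comap W) hW.comap_le Y B μ)
    (hAY : CondIndepFun (mβ.comap W) hW.comap_le A Y μ)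
    (hAB : CondIndepFun (mβ.comap W) hW.comap_le A B μ)
    (hA_law : condDistrib A W μ =ᵐ[μ.map W] condDistrib Y W μ)
    (hB_law : condDistrib B W μ =ᵐ[μ.map W] condDistrib Y W μ)
    {f : β × γ → ℝ} (hf : StronglyMeasurable f) (hfY : MemLp (fun ω ↦ f (W ω, Y ω)) 2 μ) :
    ∫ ω, (f (W ω, Y ω) - f (W ω, A ω)) * (f (W ω, Y ω) - f (W ω, B ω)) ∂μ
      = ∫ ω, (f (W ω, Y ω) - μ[fun ω ↦ f (W ω, Y ω) | mβ.comap W] ω) ^ 2 ∂μ := by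
  set F := fun ω ↦ f (W ω, Y ω)
  set FA := fun ω ↦ f (W ω, A ω)
  set FB := fun ω ↦ f (W ω, B ω)
  set g := fun ω ↦ ∫ y, f (W ω, y) ∂condDistrib Y W μ (W ω)
  have hFA : MemLp FA 2 μ := memLp_comp_prodMk_of_condDistrib_ae_eq hW hA hY hA_law hf hfY
  have hFB : MemLp FB 2 μ := memLp_comp_prodMk_of_condDistrib_ae_eq hW hB hY hB_law hf hfY
  have hcrossYB : ∫ ω, F ω * FB ω ∂μ = ∫ ω, g ω ^ 2 ∂μ :=
    integral_mul_of_condIndepFun_of_condDistrib_ae_eq hW hY hB hY hYB .rfl hB_law hf hfY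
  have hcrossAY : ∫ ω, FA ω * F ω ∂μ = ∫ ω, g ω ^ 2 ∂μ :=
    integral_mul_of_condIndepFun_of_condDistrib_ae_eq hW hA hY hY hAY hA_law .rfl hf hfY
  have hcrossAB : ∫ ω, FA ω * FB ω ∂μ = ∫ ω, g ω ^ 2 ∂μ :=
    integral_mul_of_condIndepFun_of_condDistrib_ae_eq hW hA hB hY hAB hA_law hB_law hf hfY
  have hcondExp : μ[F | mβ.comap W] =ᵐ[μ] g :=
    condExp_prod_ae_eq_integral_condDistrib hW hY.aemeasurable hf (hfY.integrable one_le_two)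
  have hLHS : ∫ ω, (F ω - FA ω) * (F ω - FB ω) ∂μ = ∫ ω, F ω ^ 2 ∂μ - ∫ ω, g ω ^ 2 ∂μ := by
    have hFF := hfY.integrable_sq
    have hFFB : Integrable (fun ω ↦ F ω * FB ω) μ := hfY.integrable_mul hFB
    have hFAF : Integrable (fun ω ↦ FA ω * F ω) μ := hFA.integrable_mul hfY
    have hFAFB : Integrable (fun ω ↦ FA ω * FB ω) μ := hFA.integrable_mul hFB
    calc ∫ ω, (F ω - FA ω) * (F ω - FB ω) ∂μ
        = ∫ ω, (F ω ^ 2 - F ω * FB ω - FA ω * F ω + FA ω * FB ω) ∂μ :=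
          integral_congr_ae (.of_forall fun ω ↦ by ring)
      _ = ∫ ω, F ω ^ 2 ∂μ - ∫ ω, g ω ^ 2 ∂μ := by
          rw [integral_add ((hFF.sub' hFFB).sub' hFAF) hFAFB, integral_sub (hFF.sub' hFFB) hFAF,
            integral_sub hFF hFFB, hcrossYB, hcrossAY, hcrossAB]
          ring
  calc ∫ ω, (F ω - FA ω) * (F ω - FB ω) ∂μ
      = ∫ ω, F ω ^ 2 ∂μ - ∫ ω, g ω ^ 2 ∂μ := hLHS
    _ = ∫ ω, F ω ^ 2 ∂μ - ∫ ω, μ[F | mβ.comap W] ω ^ 2 ∂μ := by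
        congr 1
        exact (integral_congr_ae (hcondExp.fun_comp (· ^ 2))).symm
    _ = ∫ ω, (F ω - μ[F | mβ.comap W] ω) ^ 2 ∂μ := (integral_sub_condExp_sq hW.comap_le hfY).symm

end Resample

/-- cross term of two distinct conditional resamples: if `X̃ᵢ` and `X̃ₖ`
agree with `X` off coordinate `j`, have conditionally on `X^{-j}` the conditional law of
`X^j`, and the three coordinates `X^j, X̃ᵢ^j, X̃ₖ^j` are mutually conditionally independent
given `X^{-j}`, then `E[(m(X) - m(X̃ᵢ)) (m(X) - m(X̃ₖ))] = ψ_TSI(j)` where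
`ψ_TSI(j) = E[(m(X) - E[m(X) | X^{-j}])²]`. -/
theorem cpi_cross_term_tsi
    {Ω : Type*} [mΩ : MeasurableSpace Ω] [StandardBorelSpace Ω]
    (P : Measure Ω) [IsProbabilityMeasure P]
    {p : ℕ} (j : Fin p) (X Xti Xtk : Ω → Fin p → ℝ)
    (hX : Measurable X) (hXti : Measurable Xti) (hXtk : Measurable Xtk)
    (m : (Fin p → ℝ) → ℝ) (hm : Measurable m)
    (hmL2 : MemLp (fun ω => m (X ω)) 2 P)
    (hagreei : ∀ ω, ∀ l, l ≠ j → Xti ω l = X ω l)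
    (hagreek : ∀ ω, ∀ l, l ≠ j → Xtk ω l = X ω l)
    (hle : MeasurableSpace.comap (fun ω (i : {i : Fin p // i ≠ j}) => X ω i.1)
        inferInstance ≤ mΩ)
    (hcondlawi : ∀ᵐ x ∂(P.map (fun ω (i : {i : Fin p // i ≠ j}) => X ω i.1)),
      condDistrib (fun ω => Xti ω j) (fun ω (i : {i : Fin p // i ≠ j}) => X ω i.1) P x
        = condDistrib (fun ω => X ω j) (fun ω (i : {i : Fin p // i ≠ j}) => X ω i.1) P x)
    (hcondlawk : ∀ᵐ x ∂(P.map (fun ω (i : {i : Fin p // i ≠ j}) => X ω i.1)),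
      condDistrib (fun ω => Xtk ω j) (fun ω (i : {i : Fin p // i ≠ j}) => X ω i.1) P x
        = condDistrib (fun ω => X ω j) (fun ω (i : {i : Fin p // i ≠ j}) => X ω i.1) P x)
    (hcondindep : iCondIndepFun
      (MeasurableSpace.comap (fun ω (i : {i : Fin p // i ≠ j}) => X ω i.1) inferInstance)
      hle (m := fun _ : Fin 3 => inferInstance)
      ![fun ω => X ω j, fun ω => Xti ω j, fun ω => Xtk ω j] P) :
    (∫ ω, (m (X ω) - m (Xti ω)) * (m (X ω) - m (Xtk ω)) ∂P)
      = ∫ ω, (m (X ω)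
          - (P[(fun ω => m (X ω)) |
              MeasurableSpace.comap (fun ω (i : {i : Fin p // i ≠ j}) => X ω i.1)
                inferInstance]) ω) ^ 2 ∂P := by
  set W := fun ω (i : {i : Fin p // i ≠ j}) ↦ X ω i.1
  set f := fun q : ({i : Fin p // i ≠ j} → ℝ) × ℝ ↦ m ((Equiv.funSplitAt j ℝ).symm (q.2, q.1))
  have hW : Measurable W := by fun_prop
  have hf : StronglyMeasurable f :=
    (hm.comp ((measurable_funSplitAt_symm j).comp measurable_swap)).stronglyMeasurable
  have hresample : ∀ Z : Ω → Fin p → ℝ, (∀ ω l, l ≠ j → Z ω l = X ω l) →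
      ∀ ω, m (Z ω) = f (W ω, Z ω j) := fun Z hZ ω ↦ by
    simp only [f, W, funSplitAt_symm_apply_of_forall_ne (hZ ω)]
  have hXf := hresample X fun _ _ _ ↦ rfl
  simp only [hXf, hresample Xti hagreei, hresample Xtk hagreek]
  refine integral_mul_sub_resample_eq_integral_sub_condExp_sq (A := fun ω ↦ Xti ω j)
    (B := fun ω ↦ Xtk ω j) (Y := fun ω ↦ X ω j) hW (by fun_prop) (by fun_prop) (by fun_prop)
    (hcondindep.condIndepFun (i := 0) (j := 2) (by decide))
    (hcondindep.condIndepFun (i := 1) (j := 0) (by decide))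
    (hcondindep.condIndepFun (i := 1) (j := 2) (by decide))
    hcondlawi hcondlawk hf ?_
  simpa only [hXf] using hmL2
end

section
/- Let X be a random vector in ℝ^p, m : ℝ^p → ℝ with m(X) square-integrable, and m_{−j}(X^{−j}) := E[m(X) | X^{−j}]. Let X̃ be a conditional resample of coordinate j of X: X̃^{−j} = X^{−j} and, conditionally on X^{−j}, X̃^j has the conditional law of X^j given X^{−j} and is conditionally independent of X^j. Then E[(m(X) − m(X̃))²] = 2 · ψ_TSI(j), where ψ_TSI(j) = E[(m(X) − m_{−j}(X^{−j}))²]. In particular, the population CPI with one conditional draw equals exactly twice the Total Sobol Index. -/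
/-!
Both `m(X)` and `m(X̃)` are one function `F` of `(X^{-j}, ·)`, evaluated at `X^j` and `X̃^j`.
Given `X^{-j} = z`, the pair `(X^j, X̃^j)` is i.i.d. with law `κ z`, the conditional law of `X^j`,
so the joint law of `(X^{-j}, X^j, X̃^j)` is `P_{X^{-j}} ⊗ (κ × κ)`. For an i.i.d. pair
`E[(u(Y) - u(Y'))²] = 2 Var[u(Y)]`; applied in each fibre this gives twice the conditional variance
of `m(X)` given `X^{-j}`, whose integral is `E[(m(X) - E[m(X) | X^{-j}])²]`.
-/

open MeasureTheory ProbabilityTheory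

lemma integral_sub_sq_prod_self_eq_two_mul_variance {β : Type*} [MeasurableSpace β]
    {ν : Measure β} [IsProbabilityMeasure ν] {u : β → ℝ} (hu : MemLp u 2 ν) :
    ∫ p, (u p.1 - u p.2) ^ 2 ∂(ν.prod ν) = 2 * Var[u; ν] := by
  have hsq := hu.integrable_sq
  have hint := hu.integrable one_le_two
  have hsq₂ : Integrable (fun p : β × β => u p.1 ^ 2 + u p.2 ^ 2) (ν.prod ν) :=
    (hsq.comp_fst ν).add (hsq.comp_snd ν)
  have hmul : Integrable (fun p : β × β => 2 * (u p.1 * u p.2)) (ν.prod ν) :=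
    (hint.mul_prod hint).const_mul 2
  calc ∫ p, (u p.1 - u p.2) ^ 2 ∂(ν.prod ν)
      = ∫ p, ((u p.1 ^ 2 + u p.2 ^ 2) - 2 * (u p.1 * u p.2)) ∂(ν.prod ν) := by
        congr 1; ext; ring
    _ = 2 * Var[u; ν] := by
      rw [integral_sub hsq₂ hmul, integral_add (hsq.comp_fst ν) (hsq.comp_snd ν),
        integral_fun_fst (fun y => u y ^ 2), integral_fun_snd (fun y => u y ^ 2),
        integral_const_mul, integral_prod_mul, variance_eq_sub hu]
      simp only [probReal_univ, one_smul, Pi.pow_apply]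
      ring

section CompProd

variable {Ω α β : Type*} [MeasurableSpace Ω] [MeasurableSpace α] [MeasurableSpace β]
  {ν : Measure α} [SFinite ν] {κ : Kernel α β} [IsSFiniteKernel κ]

lemma ae_memLp_two_of_memLp_two_compProd {F : α × β → ℝ} (hF : Measurable F)
    (hFL2 : MemLp F 2 (ν ⊗ₘ κ)) : ∀ᵐ a ∂ν, MemLp (fun b => F (a, b)) 2 (κ a) := by
  have hsq := hFL2.integrable_sq
  filter_upwards [((Measure.integrable_compProd_iff hsq.aestronglyMeasurable).mp hsq).1] with a ha
  exact (memLp_two_iff_integrable_sq (hF.comp measurable_prodMk_left).aestronglyMeasurable).mpr ha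

lemma integral_comp_eq_integral_integral_of_map_eq_compProd {μ : Measure Ω} {V : Ω → α × β}
    (hV : AEMeasurable V μ) (hlaw : μ.map V = ν ⊗ₘ κ) {G : α × β → ℝ}
    (hG : Measurable G) (hint : Integrable (fun ω => G (V ω)) μ) :
    ∫ ω, G (V ω) ∂μ = ∫ a, ∫ b, G (a, b) ∂κ a ∂ν := by
  rw [← integral_map hV hG.aestronglyMeasurable, hlaw, Measure.integral_compProd]
  rw [← hlaw]
  exact (integrable_map_measure hG.aestronglyMeasurable hV).mpr hint

end CompProd

section ConditionalResample

variable {Ω γ β : Type*} {mΩ : MeasurableSpace Ω} [StandardBorelSpace Ω] [MeasurableSpace γ]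
  [MeasurableSpace β] [StandardBorelSpace β] [Nonempty β]
  {μ : Measure Ω} [IsProbabilityMeasure μ] {Z : Ω → γ} {Y Y' : Ω → β}

theorem integral_sub_sq_eq_two_mul_integral_sub_condExp_sq (hZ : Measurable Z)
    (hY : Measurable Y) (hY' : Measurable Y')
    (hlaw : condDistrib Y' Z μ =ᵐ[μ.map Z] condDistrib Y Z μ) (hindep : Y' ⟂ᵢ[Z, hZ; μ] Y)
    {F : γ × β → ℝ} (hF : Measurable F) (hFL2 : MemLp (fun ω => F (Z ω, Y ω)) 2 μ) :
    ∫ ω, (F (Z ω, Y ω) - F (Z ω, Y' ω)) ^ 2 ∂μ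
      = 2 * ∫ ω, (F (Z ω, Y ω)
          - μ[fun ω => F (Z ω, Y ω) | MeasurableSpace.comap Z inferInstance] ω) ^ 2 ∂μ := by
  set κ := condDistrib Y Z μ
  set h : γ → ℝ := fun z => ∫ y, F (z, y) ∂κ z
  have hh : Measurable h := hF.stronglyMeasurable.integral_kernel_prod_right'.measurable
  have law : μ.map (fun ω => (Z ω, Y ω)) = μ.map Z ⊗ₘ κ :=
    (compProd_map_condDistrib hY.aemeasurable).symm
  have law' : μ.map (fun ω => (Z ω, Y' ω)) = μ.map Z ⊗ₘ κ := by
    rw [← compProd_map_condDistrib hY'.aemeasurable]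
    exact Measure.compProd_congr hlaw
  have law₃ : μ.map (fun ω => (Z ω, Y ω, Y' ω)) = μ.map Z ⊗ₘ (κ ×ₖ κ) := by
    rw [(condIndepFun_iff_map_prod_eq_prod_condDistrib_prod_condDistrib hY hY' hZ).mp hindep.symm,
      ← Measure.compProd_eq_comp_prod]
    refine Measure.compProd_congr (hlaw.mono fun z hz => ?_)
    rw [Kernel.prod_apply, Kernel.prod_apply, hz]
  have hFL2' : MemLp F 2 (μ.map Z ⊗ₘ κ) := by
    rw [← law]
    exact (memLp_map_measure_iff hF.aestronglyMeasurable (hZ.prodMk hY).aemeasurable).mpr hFL2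
  have hF'L2 : MemLp (fun ω => F (Z ω, Y' ω)) 2 μ := by
    rw [← law'] at hFL2'
    exact (memLp_map_measure_iff hF.aestronglyMeasurable (hZ.prodMk hY').aemeasurable).mp hFL2'
  have hcond : μ[fun ω => F (Z ω, Y ω) | MeasurableSpace.comap Z inferInstance]
      =ᵐ[μ] fun ω => h (Z ω) :=
    condExp_prod_ae_eq_integral_condDistrib hZ hY.aemeasurable hF.stronglyMeasurable
      (hFL2.integrable one_le_two)
  have hhL2 : MemLp (fun ω => h (Z ω)) 2 μ := (hFL2.condExp one_le_two).ae_eq hcond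
  calc ∫ ω, (F (Z ω, Y ω) - F (Z ω, Y' ω)) ^ 2 ∂μ
      = ∫ z, ∫ p, (F (z, p.1) - F (z, p.2)) ^ 2 ∂(κ z).prod (κ z) ∂μ.map Z := by
        rw [integral_comp_eq_integral_integral_of_map_eq_compProd
          (G := fun q => (F (q.1, q.2.1) - F (q.1, q.2.2)) ^ 2)
          (hZ.prodMk (hY.prodMk hY')).aemeasurable law₃ (by fun_prop)
          (hFL2.sub hF'L2).integrable_sq]
        simp only [Kernel.prod_apply]
    _ = ∫ z, 2 * ∫ y, (F (z, y) - h z) ^ 2 ∂κ z ∂μ.map Z := by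
        refine integral_congr_ae ?_
        filter_upwards [ae_memLp_two_of_memLp_two_compProd hF hFL2'] with z hz
        rw [integral_sub_sq_prod_self_eq_two_mul_variance hz, variance_eq_integral hz.aemeasurable]
    _ = 2 * ∫ ω, (F (Z ω, Y ω) - h (Z ω)) ^ 2 ∂μ := by
        rw [integral_const_mul, integral_comp_eq_integral_integral_of_map_eq_compProd
          (G := fun q => (F q - h q.1) ^ 2) (hZ.prodMk hY).aemeasurable law (by fun_prop)
          (hFL2.sub hhL2).integrable_sq]
    _ = _ := by
        congr 1
        refine integral_congr_ae ?_
        filter_upwards [hcond] with ω hω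
        rw [hω]

end ConditionalResample

/-- population CPI with one conditional draw is twice the TSI: if `X̃`
agrees with `X` off coordinate `j` and, conditionally on `X^{-j}`, `X̃^j` has the conditional
law of `X^j` given `X^{-j}` and is conditionally independent of `X^j`, then
`E[(m(X) - m(X̃))²] = 2 ψ_TSI(j)` where
`ψ_TSI(j) = E[(m(X) - E[m(X) | X^{-j}])²]`. -/
theorem cpi_population_twice_tsi
    {Ω : Type*} [mΩ : MeasurableSpace Ω] [StandardBorelSpace Ω]
    (P : Measure Ω) [IsProbabilityMeasure P]
    {p : ℕ} (j : Fin p) (X Xt : Ω → Fin p → ℝ)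
    (hX : Measurable X) (hXt : Measurable Xt)
    (m : (Fin p → ℝ) → ℝ) (hm : Measurable m)
    (hmL2 : MemLp (fun ω => m (X ω)) 2 P)
    (hagree : ∀ ω, ∀ l, l ≠ j → Xt ω l = X ω l)
    (hle : MeasurableSpace.comap (fun ω (i : {i : Fin p // i ≠ j}) => X ω i.1)
        inferInstance ≤ mΩ)
    (hcondlaw : ∀ᵐ x ∂(P.map (fun ω (i : {i : Fin p // i ≠ j}) => X ω i.1)),
      condDistrib (fun ω => Xt ω j) (fun ω (i : {i : Fin p // i ≠ j}) => X ω i.1) P x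
        = condDistrib (fun ω => X ω j) (fun ω (i : {i : Fin p // i ≠ j}) => X ω i.1) P x)
    (hcondindep : CondIndepFun
      (MeasurableSpace.comap (fun ω (i : {i : Fin p // i ≠ j}) => X ω i.1) inferInstance)
      hle (fun ω => Xt ω j) (fun ω => X ω j) P) :
    (∫ ω, (m (X ω) - m (Xt ω)) ^ 2 ∂P)
      = 2 * ∫ ω, (m (X ω)
          - (P[(fun ω => m (X ω)) |
              MeasurableSpace.comap (fun ω (i : {i : Fin p // i ≠ j}) => X ω i.1)
                inferInstance]) ω) ^ 2 ∂P := by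
  set Z : Ω → ({i : Fin p // i ≠ j} → ℝ) := fun ω i => X ω i.1
  have hZ : Measurable Z := measurable_pi_lambda _ fun i => (measurable_pi_apply i.1).comp hX
  set e := Homeomorph.funSplitAt ℝ j
  set F : ({i : Fin p // i ≠ j} → ℝ) × ℝ → ℝ := fun q => m (e.symm (q.2, q.1))
  have hF : Measurable F := hm.comp (e.symm.continuous.measurable.comp measurable_swap)
  have hmF : ∀ x, m x = F (fun i => x i.1, x j) := fun x => congrArg m (e.symm_apply_apply x).symm
  have hFX : ∀ ω, m (X ω) = F (Z ω, X ω j) := fun ω => hmF (X ω)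
  have hFXt : ∀ ω, m (Xt ω) = F (Z ω, Xt ω j) := fun ω => by
    rw [hmF (Xt ω)]
    congr 3
    exact funext fun i => hagree ω i.1 i.2
  simp only [hFX, hFXt] at hmL2 ⊢
  exact integral_sub_sq_eq_two_mul_integral_sub_condExp_sq hZ
    ((measurable_pi_apply j).comp hX) ((measurable_pi_apply j).comp hXt) hcondlaw hcondindep hF hmL2
end
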